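/- arXiv:1303.2227 — 6 statements merged into one kernel-verified Lean document; each statement's English description precedes it below -/
import Mathlib

section
/- For all integers n ≥ 1 and 0 ≤ l ≤ n, we have 2·∑_{k=l+1}^{n} k·C(n,k)/C(n+k,k) = n·C(n-1,l)/C(n+l,l) = (n-l)·C(n,l)/C(n+l,l), where C(a,b) denotes the binomial coefficient. -/
open Finset

/-- Sign factor for an alternating multiple harmonic sum entry. -/
def aSgn (s : ℤ) : ℚ := if 0 < s then 1 else -1

/-- Alternating multiple harmonic sum `H_n(s₁,…,s_ℓ)` (strict indices). -/
def Hh : ℕ → List ℤ → ℚ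
  | _, [] => 1
  | n, s :: r => ∑ k ∈ Finset.Icc 1 n, aSgn s ^ k / (k : ℚ) ^ s.natAbs * Hh (k - 1) r

/-- Alternating multiple harmonic star sum `H*_n(s₁,…,s_ℓ)` (weak indices). -/
def Hstar : ℕ → List ℤ → ℚ
  | _, [] => 1
  | n, s :: r => ∑ k ∈ Finset.Icc 1 n, aSgn s ^ k / (k : ℚ) ^ s.natAbs * Hstar k r

/-- All compositions (ordered tuples of positive integers) of `w`. -/
def comps : ℕ → List (List ℕ)
  | 0 => [[]]
  | (w+1) => (List.range (w+1)).flatMap (fun j => (comps (w - j)).map (fun l => (j+1) :: l))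
decreasing_by simp_wf <;> omega

/-- Coerce a list of naturals to a list of integers. -/
def natList (l : List ℕ) : List ℤ := l.map (fun m => (m : ℤ))

/-!
With `g k = (n - k) C(n,k) / C(n+k,k)`, the identities `C(n,k+1) (k+1) = C(n,k) (n-k)` and
`C(n+k+1,k+1) (k+1) = (n+k+1) C(n+k,k)` give `2 k C(n,k) / C(n+k,k) = g (k-1) - g k`, so the sum
telescopes to `g l - g n = g l`. The other form of `g l` is `n C(n-1,l) = (n-l) C(n,l)`.
-/

theorem Nat.mul_choose_sub_one (n k : ℕ) : n * (n - 1).choose k = (n - k) * n.choose k := by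
  cases n with
  | zero => simp
  | succ m => simpa [mul_comm] using Nat.choose_mul_succ_eq m k

theorem Nat.cast_mul_choose_sub_one {R : Type*} [Ring R] {n k : ℕ} (hk : k ≤ n) :
    (n : R) * (n - 1).choose k = ((n : R) - k) * n.choose k := by
  rw [← Nat.cast_sub hk]
  exact_mod_cast congrArg (Nat.cast : ℕ → R) (Nat.mul_choose_sub_one n k)

theorem two_mul_term_eq_sub {n j : ℕ} (hj : j < n) :
    2 * (((j + 1 : ℕ) : ℚ) * n.choose (j + 1) / (n + (j + 1)).choose (j + 1)) =
      ((n : ℚ) - j) * n.choose j / (n + j).choose j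
        - ((n : ℚ) - (j + 1 : ℕ)) * n.choose (j + 1) / (n + (j + 1)).choose (j + 1) := by
  have hc : ((n + j).choose j : ℚ) ≠ 0 := by exact_mod_cast (Nat.choose_pos (by omega)).ne'
  have hd : ((n + (j + 1)).choose (j + 1) : ℚ) ≠ 0 := by
    exact_mod_cast (Nat.choose_pos (by omega)).ne'
  have hb : (n.choose (j + 1) : ℚ) * (j + 1) = n.choose j * ((n : ℚ) - j) := by
    rw [← Nat.cast_sub hj.le]
    exact_mod_cast Nat.choose_succ_right_eq n j
  have hd' : ((n + (j + 1)).choose (j + 1) : ℚ) * (j + 1) = (n + j + 1) * (n + j).choose j := by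
    exact_mod_cast (Nat.add_one_mul_choose_eq (n + j) j).symm
  field_simp
  push_cast
  linear_combination ((n + (j + 1)).choose (j + 1) : ℚ) * hb - (n.choose (j + 1) : ℚ) * hd'

theorem two_mul_sum_Icc_choose_div_choose {n l : ℕ} (hl : l ≤ n) :
    2 * ∑ k ∈ Icc (l + 1) n, (k : ℚ) * n.choose k / (n + k).choose k =
      ((n : ℚ) - l) * n.choose l / (n + l).choose l := by
  set g : ℕ → ℚ := fun k => ((n : ℚ) - k) * n.choose k / (n + k).choose k with hg
  calc _ = ∑ i ∈ Ico l n, (-g (i + 1) - -g i) := by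
        rw [mul_sum, ← Ico_add_one_right_eq_Icc, ← sum_Ico_add']
        refine sum_congr rfl fun i hi => ?_
        rw [two_mul_term_eq_sub (mem_Ico.1 hi).2, hg]
        ring
    _ = g l := (sum_Ico_sub (fun k => -g k) hl).trans (by simp [g])

theorem stmt0_general (n l : ℕ) (hl : l ≤ n) :
    2 * ∑ k ∈ Finset.Icc (l+1) n, (k : ℚ) * (n.choose k) / ((n+k).choose k)
      = (n : ℚ) * ((n-1).choose l) / ((n+l).choose l) ∧
    (n : ℚ) * ((n-1).choose l) / ((n+l).choose l)
      = ((n : ℚ) - (l : ℚ)) * (n.choose l) / ((n+l).choose l) := by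
  have hg : (n : ℚ) * ((n - 1).choose l) / ((n + l).choose l)
      = ((n : ℚ) - l) * n.choose l / (n + l).choose l := by
    rw [Nat.cast_mul_choose_sub_one hl]
  exact ⟨(two_mul_sum_Icc_choose_div_choose hl).trans hg.symm, hg⟩

theorem stmt0 (n l : ℕ) (hn : 1 ≤ n) (hl : l ≤ n) :
    2 * ∑ k ∈ Finset.Icc (l+1) n, (k : ℚ) * (n.choose k) / ((n+k).choose k)
      = (n : ℚ) * ((n-1).choose l) / ((n+l).choose l) ∧
    (n : ℚ) * ((n-1).choose l) / ((n+l).choose l)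
      = ((n : ℚ) - (l : ℚ)) * (n.choose l) / ((n+l).choose l) :=
  stmt0_general n l hl
end

section
/- For all integers n ≥ 1, a ≥ 0, the multiple harmonic star sum H*_n({2}^a, 1) equals 2·∑_{k=1}^{n} C(n,k)/(k^{2a+1}·C(n+k,k)). -/
/-!
Write `r(n, k) = chooseRatio n k = C(n, k) / C(n + k, k)`.
Comparing `r(n + 1, k)` with `r(n, k)` gives
`r(n + 1, k) - r(n, k) = (k / (n + 1))² r(n + 1, k)`, so `∑_{m ≤ n} r(m, k) / m²` telescopes
to `r(n, k) / k²`; after exchanging the two summations this is exactly the step `a → a + 1`.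
For `a = 0` the claim `H_n = 2 ∑_k r(n, k) / k` follows by induction on `n` from
`∑_k k r(n, k) = n / 2`, which telescopes in `k` because
`(n + k + 1) r(n, k + 1) = (n - k) r(n, k)`.
-/

open Finset

def chooseRatio (n k : ℕ) : ℚ := n.choose k / (n + k).choose k

lemma chooseRatio_of_lt {n k : ℕ} (h : n < k) : chooseRatio n k = 0 := by
  simp [chooseRatio, Nat.choose_eq_zero_of_lt h]

lemma chooseRatio_one_right (n : ℕ) : chooseRatio n 1 = n / (n + 1) := by
  simp [chooseRatio]

lemma chooseRatio_succ_right (n k : ℕ) :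
    (n + k + 1 : ℚ) * chooseRatio n (k + 1) = (n - k) * chooseRatio n k := by
  rcases lt_or_ge n k with h | h
  · simp [chooseRatio_of_lt h, chooseRatio_of_lt (h.trans k.lt_succ_self)]
  have hnum : (n.choose (k + 1) : ℚ) * (k + 1) = n.choose k * (n - k) := by
    have := congrArg (Nat.cast (R := ℚ)) (Nat.choose_succ_right_eq n k)
    push_cast [Nat.cast_sub h] at this
    exact this
  have hden : (n + k + 1 : ℚ) * (n + k).choose k = (n + (k + 1)).choose (k + 1) * (k + 1) := by
    exact_mod_cast Nat.add_one_mul_choose_eq (n + k) k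
  have h₀ : ((n + k).choose k : ℚ) ≠ 0 := by exact_mod_cast (Nat.choose_pos (by omega)).ne'
  have h₁ : ((n + (k + 1)).choose (k + 1) : ℚ) ≠ 0 := by
    exact_mod_cast (Nat.choose_pos (by omega)).ne'
  simp only [chooseRatio]
  field_simp
  linear_combination (n.choose (k + 1) : ℚ) * hden + ((n + (k + 1)).choose (k + 1) : ℚ) * hnum

lemma chooseRatio_succ_left_sub (n k : ℕ) :
    chooseRatio (n + 1) k - chooseRatio n k =
      k ^ 2 / (n + 1) ^ 2 * chooseRatio (n + 1) k := by
  rcases lt_or_ge (n + 1) k with h | h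
  · simp [chooseRatio_of_lt h, chooseRatio_of_lt (n.lt_succ_self.trans h)]
  have hnum : (n.choose k : ℚ) * (n + 1) = (n + 1).choose k * (n + 1 - k) := by
    have := congrArg (Nat.cast (R := ℚ)) (Nat.choose_mul_succ_eq n k)
    push_cast [Nat.cast_sub h] at this
    exact this
  have hden : ((n + k).choose k : ℚ) * (n + k + 1) = (n + 1 + k).choose k * (n + 1) := by
    have := congrArg (Nat.cast (R := ℚ)) (Nat.choose_mul_succ_eq (n + k) k)
    rw [show n + k + 1 - k = n + 1 by omega, show n + k + 1 = n + 1 + k by omega] at this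
    push_cast at this
    linear_combination this
  have h₀ : ((n + k).choose k : ℚ) ≠ 0 := by exact_mod_cast (Nat.choose_pos (by omega)).ne'
  have h₁ : ((n + 1 + k).choose k : ℚ) ≠ 0 := by
    exact_mod_cast (Nat.choose_pos (by omega)).ne'
  simp only [chooseRatio]
  field_simp
  linear_combination
    (-((n + k).choose k : ℚ) * (n + 1 + k)) * hnum + (n.choose k * (n + 1) : ℚ) * hden

lemma sum_Icc_natCast_mul_chooseRatio (n : ℕ) :
    ∑ k ∈ Icc 1 n, (k : ℚ) * chooseRatio n k = n / 2 := by
  rcases n.eq_zero_or_pos with rfl | hn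
  · simp
  set g : ℕ → ℚ := fun k ↦ (n + k) * chooseRatio n k
  have hg : ∀ k : ℕ, (k : ℚ) * chooseRatio n k = (g k - g (k + 1)) / 2 := fun k ↦ by
    simp only [g]
    push_cast
    linear_combination (1 / 2 : ℚ) * chooseRatio_succ_right n k
  rw [sum_congr rfl fun k _ ↦ hg k, ← sum_div,
    sum_congr rfl fun k _ ↦ (neg_sub (g (k + 1)) (g k)).symm, sum_neg_distrib, sum_Icc_sub hn]
  simp only [g, chooseRatio_one_right, chooseRatio_of_lt n.lt_succ_self]
  field_simp
  ring

lemma sum_Icc_chooseRatio_div_sq {k : ℕ} (hk : k ≠ 0) (n : ℕ) :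
    ∑ m ∈ Icc 1 n, chooseRatio m k / m ^ 2 = chooseRatio n k / k ^ 2 := by
  induction n with
  | zero => simp [chooseRatio_of_lt (Nat.pos_of_ne_zero hk)]
  | succ n ih =>
    rw [sum_Icc_succ_top (by omega), ih]
    have hk' : (k : ℚ) ≠ 0 := by exact_mod_cast hk
    have hlast : chooseRatio (n + 1) k / (n + 1) ^ 2
        = (chooseRatio (n + 1) k - chooseRatio n k) / k ^ 2 := by
      rw [chooseRatio_succ_left_sub]
      field_simp
    push_cast
    rw [hlast]
    ring

lemma sum_Icc_one_div_eq_two_mul_sum_chooseRatio_div (n : ℕ) :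
    ∑ k ∈ Icc 1 n, (1 / k : ℚ) = 2 * ∑ k ∈ Icc 1 n, chooseRatio n k / k := by
  induction n with
  | zero => simp
  | succ n ih =>
    have hstep : ∑ k ∈ Icc 1 (n + 1), chooseRatio (n + 1) k / k
        - ∑ k ∈ Icc 1 (n + 1), chooseRatio n k / k = (n + 1 : ℚ)⁻¹ / 2 := by
      calc _ = ∑ k ∈ Icc 1 (n + 1), (k : ℚ) * chooseRatio (n + 1) k / (n + 1) ^ 2 := by
            rw [← sum_sub_distrib]
            refine sum_congr rfl fun k hk ↦ ?_
            have hk' : (k : ℚ) ≠ 0 := Nat.cast_ne_zero.mpr (by simp at hk; omega)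
            rw [← sub_div, chooseRatio_succ_left_sub]
            field_simp
        _ = _ := by
            rw [← sum_div, sum_Icc_natCast_mul_chooseRatio]
            push_cast
            field_simp
    rw [sum_Icc_succ_top (by omega : 1 ≤ n + 1) (fun k ↦ chooseRatio n k / k),
      chooseRatio_of_lt n.lt_succ_self, zero_div, add_zero] at hstep
    rw [sum_Icc_succ_top (by omega), ih]
    push_cast
    linear_combination -2 * hstep

lemma sum_Icc_chooseRatio_div_of_le {m n : ℕ} (h : m ≤ n) (g : ℕ → ℚ) :
    ∑ k ∈ Icc 1 m, chooseRatio m k / g k = ∑ k ∈ Icc 1 n, chooseRatio m k / g k :=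
  sum_subset (Icc_subset_Icc_right h) fun k hk hkm ↦ by
    rw [chooseRatio_of_lt (by simp at hk hkm; omega), zero_div]

lemma Hstar_singleton_one (n : ℕ) : Hstar n [1] = ∑ k ∈ Icc 1 n, (1 / k : ℚ) := by
  simp [Hstar, aSgn]

lemma Hstar_two_cons (n : ℕ) (r : List ℤ) :
    Hstar n (2 :: r) = ∑ k ∈ Icc 1 n, Hstar k r / k ^ 2 := by
  simp [Hstar, aSgn, div_eq_inv_mul]

lemma Hstar_replicate_two_append_one (a n : ℕ) :
    Hstar n (List.replicate a 2 ++ [1]) =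
      2 * ∑ k ∈ Icc 1 n, chooseRatio n k / k ^ (2 * a + 1) := by
  induction a generalizing n with
  | zero => simpa [Hstar_singleton_one] using sum_Icc_one_div_eq_two_mul_sum_chooseRatio_div n
  | succ a ih =>
    rw [List.replicate_succ, List.cons_append, Hstar_two_cons]
    calc ∑ m ∈ Icc 1 n, Hstar m (List.replicate a 2 ++ [1]) / m ^ 2
        = ∑ m ∈ Icc 1 n, (2 * ∑ k ∈ Icc 1 n, chooseRatio m k / k ^ (2 * a + 1)) / m ^ 2 :=
          sum_congr rfl fun m hm ↦ by
            rw [ih, sum_Icc_chooseRatio_div_of_le (mem_Icc.mp hm).2]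
      _ = ∑ k ∈ Icc 1 n, 2 / k ^ (2 * a + 1) * ∑ m ∈ Icc 1 n, chooseRatio m k / m ^ 2 := by
          simp_rw [mul_sum, sum_div]
          rw [sum_comm]
          refine sum_congr rfl fun k _ ↦ sum_congr rfl fun m _ ↦ ?_
          ring
      _ = ∑ k ∈ Icc 1 n, 2 / k ^ (2 * a + 1) * (chooseRatio n k / k ^ 2) :=
          sum_congr rfl fun k hk ↦ by
            rw [sum_Icc_chooseRatio_div_sq (by simp at hk; omega)]
      _ = 2 * ∑ k ∈ Icc 1 n, chooseRatio n k / k ^ (2 * (a + 1) + 1) := by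
          rw [mul_sum]
          refine sum_congr rfl fun k _ ↦ ?_
          ring

theorem stmt1_general (n a : ℕ) :
    Hstar n (List.replicate a 2 ++ [1])
      = 2 * ∑ k ∈ Finset.Icc 1 n,
          (n.choose k : ℚ) / ((k : ℚ) ^ (2*a+1) * ((n+k).choose k)) := by
  rw [Hstar_replicate_two_append_one]
  congr 1
  refine sum_congr rfl fun k _ ↦ ?_
  rw [chooseRatio, div_div, mul_comm]

theorem stmt1 (n a : ℕ) (hn : 1 ≤ n) :
    Hstar n (List.replicate a 2 ++ [1])
      = 2 * ∑ k ∈ Finset.Icc 1 n,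
          (n.choose k : ℚ) / ((k : ℚ) ^ (2*a+1) * ((n+k).choose k)) :=
  stmt1_general n a
end

section
/- For all integers n ≥ 1 and a, b ≥ 0, H*_n({2}^a, 1, {2}^b, 1) = 2·∑_{k=1}^{n} C(n,k)/(k^{2(a+b)+2}·C(n+k,k)) + 4·∑_{k=1}^{n} H_{k-1}(2b+1)·C(n,k)/(k^{2a+1}·C(n+k,k)), where H_{k-1}(2b+1) = ∑_{j=1}^{k-1} 1/j^{2b+1}. -/
open Finset

/-!
Write `c(n,k) = C(n,k)/C(n+k,k)`. From `(n+1)² (c(n+1,k) - c(n,k)) = k² c(n+1,k)` and the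
telescoping identity `2 ∑_{j<k≤N} k c(N,k) = (N-j) c(N,j)`, induction on `n` gives
`∑_{m≤n} c(m,k)/m² = c(n,k)/k²` and `∑_{m≤n} c(m,j)/m = c(n,j)/j + 2 ∑_{j<k≤n} c(n,k)/k`.
So if `H*_m(l) = ∑_k w_k c(m,k)` for all `m`, prepending `2` to `l` turns the weights into
`w_k/k²` and prepending `1` turns them into `(w_k + 2 ∑_{j<k} w_j)/k`. Starting from
`H*_n(1) = 2 ∑_k c(n,k)/k` (the case `j = 0` above, where `c(n,0)/0 = 0`) and reading the tuple
from the right yields the closed form.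
-/

noncomputable def binomRatio (n k : ℕ) : ℚ := (n.choose k : ℚ) / (n + k).choose k

lemma binomRatio_zero_right (n : ℕ) : binomRatio n 0 = 1 := by
  simp [binomRatio]

lemma binomRatio_of_lt {n k : ℕ} (h : n < k) : binomRatio n k = 0 := by
  simp [binomRatio, Nat.choose_eq_zero_of_lt h]

lemma cast_choose_add_ne_zero (n k : ℕ) : ((n + k).choose k : ℚ) ≠ 0 := by
  exact_mod_cast (Nat.choose_pos (Nat.le_add_left k n)).ne'

lemma binomRatio_succ_right (n k : ℕ) :
    ((n : ℚ) + k + 1) * binomRatio n (k + 1) = ((n : ℚ) - k) * binomRatio n k := by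
  rcases lt_or_ge n k with h | h
  · rw [binomRatio_of_lt h, binomRatio_of_lt (by omega)]; ring
  have top : (n.choose (k + 1) * (k + 1) : ℚ) = n.choose k * ((n : ℚ) - k) := by
    exact_mod_cast Nat.choose_succ_right_eq n k
  have bot : ((n : ℚ) + k + 1) * (n + k).choose k
      = (n + (k + 1)).choose (k + 1) * ((k : ℚ) + 1) := by
    exact_mod_cast Nat.add_one_mul_choose_eq (n + k) k
  unfold binomRatio
  rw [mul_div_assoc', mul_div_assoc',
    div_eq_div_iff (cast_choose_add_ne_zero n (k + 1)) (cast_choose_add_ne_zero n k)]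
  apply mul_right_cancel₀ (Nat.cast_add_one_ne_zero k)
  linear_combination ((n : ℚ) + k + 1) * ((n + k).choose k : ℚ) * top
    + (n.choose k : ℚ) * ((n : ℚ) - k) * bot

lemma binomRatio_succ_left_sub (n k : ℕ) :
    ((n : ℚ) + 1) ^ 2 * (binomRatio (n + 1) k - binomRatio n k)
      = (k : ℚ) ^ 2 * binomRatio (n + 1) k := by
  rcases lt_or_ge (n + 1) k with h | h
  · rw [binomRatio_of_lt h, binomRatio_of_lt (by omega)]; ring
  have top : n.choose k * ((n : ℚ) + 1) = (n + 1).choose k * ((n : ℚ) + 1 - k) := by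
    exact_mod_cast Nat.choose_mul_succ_eq n k
  have bot : (n + k).choose k * ((n : ℚ) + k + 1) = (n + 1 + k).choose k * ((n : ℚ) + 1) := by
    rw [show n + 1 + k = n + k + 1 by omega]
    exact_mod_cast (Nat.choose_mul_succ_eq (n + k) k).trans (by congr 2; omega)
  have hn : (n : ℚ) + 1 ≠ 0 := Nat.cast_add_one_ne_zero n
  have hnk : (n : ℚ) + k + 1 ≠ 0 := by positivity
  have h₁ := cast_choose_add_ne_zero (n + 1) k
  unfold binomRatio
  rw [eq_div_of_mul_eq hn top, eq_div_of_mul_eq hnk bot]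
  field_simp
  ring

lemma two_mul_sum_Ioc_mul_binomRatio (N j : ℕ) :
    2 * ∑ k ∈ Ioc j N, (k : ℚ) * binomRatio N k = ((N : ℚ) - j) * binomRatio N j := by
  rcases lt_or_ge N j with h | h
  · rw [Ioc_eq_empty (by omega), binomRatio_of_lt h]; simp
  have step (k : ℕ) : 2 * ((k : ℚ) * binomRatio N k)
      = -((N + (k + 1 : ℕ) : ℚ) * binomRatio N (k + 1) - (N + k) * binomRatio N k) := by
    push_cast
    linear_combination binomRatio_succ_right N k
  rw [mul_sum, sum_congr rfl fun k _ => step k, sum_neg_distrib, ← Ico_add_one_add_one_eq_Ioc,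
    sum_Ico_sub (fun k => (N + k : ℚ) * binomRatio N k) (by omega),
    binomRatio_of_lt (by omega : N < N + 1)]
  push_cast
  linear_combination binomRatio_succ_right N j

lemma sum_binomRatio_div_sq (n : ℕ) {k : ℕ} (hk : k ≠ 0) :
    ∑ m ∈ Icc 1 n, binomRatio m k / (m : ℚ) ^ 2 = binomRatio n k / (k : ℚ) ^ 2 := by
  induction n with
  | zero => simp [binomRatio_of_lt (Nat.pos_of_ne_zero hk)]
  | succ n ih =>
    rw [sum_Icc_succ_top (by omega), ih]
    have hk' : (k : ℚ) ≠ 0 := Nat.cast_ne_zero.mpr hk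
    have hn : (n : ℚ) + 1 ≠ 0 := Nat.cast_add_one_ne_zero n
    push_cast
    field_simp
    linear_combination -binomRatio_succ_left_sub n k

lemma binomRatio_succ_left_sub_div (n k : ℕ) :
    binomRatio (n + 1) k / k - binomRatio n k / k
      = k * binomRatio (n + 1) k / ((n : ℚ) + 1) ^ 2 := by
  rcases eq_or_ne k 0 with rfl | hk
  · simp
  have hk' : (k : ℚ) ≠ 0 := Nat.cast_ne_zero.mpr hk
  have hn : (n : ℚ) + 1 ≠ 0 := Nat.cast_add_one_ne_zero n
  field_simp
  linear_combination binomRatio_succ_left_sub n k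

lemma sum_binomRatio_div (n j : ℕ) :
    ∑ m ∈ Icc 1 n, binomRatio m j / m
      = binomRatio n j / j + 2 * ∑ k ∈ Ioc j n, binomRatio n k / k := by
  induction n with
  | zero => rw [Ioc_eq_empty (by omega)]; cases j <;> simp [binomRatio]
  | succ n ih =>
    have hext :
        ∑ k ∈ Ioc j (n + 1), binomRatio n k / k = ∑ k ∈ Ioc j n, binomRatio n k / k := by
      refine (sum_subset (Ioc_subset_Ioc_right (by omega)) fun k hk hk' => ?_).symm
      simp only [mem_Ioc] at hk hk'
      rw [binomRatio_of_lt (by omega), zero_div]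
    have hsum : ∑ k ∈ Ioc j (n + 1), binomRatio (n + 1) k / k
        - ∑ k ∈ Ioc j (n + 1), binomRatio n k / k
        = (∑ k ∈ Ioc j (n + 1), (k : ℚ) * binomRatio (n + 1) k) / ((n : ℚ) + 1) ^ 2 := by
      rw [← sum_sub_distrib, sum_div]
      exact sum_congr rfl fun k _ => binomRatio_succ_left_sub_div n k
    have hlast : binomRatio (n + 1) j / ((n : ℚ) + 1)
        = ((n : ℚ) + 1) * binomRatio (n + 1) j / ((n : ℚ) + 1) ^ 2 := by
      field_simp
    have htel := two_mul_sum_Ioc_mul_binomRatio (n + 1) j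
    rw [sum_Icc_succ_top (by omega), ih, ← hext]
    push_cast at htel ⊢
    linear_combination
      -(binomRatio_succ_left_sub_div n j + 2 * hsum - hlast + htel / ((n : ℚ) + 1) ^ 2)

lemma Hstar_cons_of_pos (n : ℕ) {s : ℤ} (hs : 0 < s) (l : List ℤ) :
    Hstar n (s :: l) = ∑ m ∈ Icc 1 n, Hstar m l / (m : ℚ) ^ s.natAbs := by
  simp only [Hstar, aSgn, if_pos hs, one_pow]
  exact sum_congr rfl fun m _ => by ring

lemma Hh_singleton_of_pos (n : ℕ) {s : ℤ} (hs : 0 < s) :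
    Hh n [s] = ∑ j ∈ Icc 1 n, 1 / (j : ℚ) ^ s.natAbs := by
  simp [Hh, aSgn, if_pos hs]

lemma sum_Icc_sum_Icc_binomRatio_div (n : ℕ) (w g : ℕ → ℚ) :
    ∑ m ∈ Icc 1 n, (∑ k ∈ Icc 1 m, w k * binomRatio m k) / g m
      = ∑ k ∈ Icc 1 n, w k * ∑ m ∈ Icc 1 n, binomRatio m k / g m := by
  have extend (m : ℕ) (hm : m ∈ Icc 1 n) :
      ∑ k ∈ Icc 1 m, w k * binomRatio m k = ∑ k ∈ Icc 1 n, w k * binomRatio m k := by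
    refine sum_subset (Icc_subset_Icc_right (mem_Icc.mp hm).2) fun k hk hk' => ?_
    simp only [mem_Icc] at hk hk'
    rw [binomRatio_of_lt (by omega), mul_zero]
  rw [sum_congr rfl fun m hm => by rw [extend m hm, sum_div], sum_comm]
  exact sum_congr rfl fun k _ => by rw [mul_sum]; exact sum_congr rfl fun m _ => by ring

def HstarExpansion (l : List ℤ) (w : ℕ → ℚ) : Prop :=
  ∀ n, Hstar n l = ∑ k ∈ Icc 1 n, w k * binomRatio n k

lemma hstarExpansion_one : HstarExpansion [1] fun k => 2 / k := by
  intro n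
  have harmonic := sum_binomRatio_div n 0
  rw [← Icc_add_one_left_eq_Ioc, zero_add] at harmonic
  simp only [binomRatio_zero_right, Nat.cast_zero, div_zero, zero_add] at harmonic
  rw [Hstar_cons_of_pos n one_pos]
  simp only [Hstar, Int.natAbs_one, pow_one, harmonic, mul_sum]
  exact sum_congr rfl fun k _ => by ring

namespace HstarExpansion

variable {l : List ℤ} {w : ℕ → ℚ}

lemma cons_two (h : HstarExpansion l w) : HstarExpansion (2 :: l) fun k => w k / k ^ 2 := by
  intro n
  unfold HstarExpansion at h
  simp only [Hstar_cons_of_pos n two_pos, h, Int.reduceAbs, sum_Icc_sum_Icc_binomRatio_div]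
  refine sum_congr rfl fun k hk => ?_
  rw [sum_binomRatio_div_sq n (by simp at hk; omega)]
  ring

lemma replicate_two_append (h : HstarExpansion l w) (a : ℕ) :
    HstarExpansion (List.replicate a 2 ++ l) fun k => w k / k ^ (2 * a) := by
  induction a with
  | zero => simpa using h
  | succ a ih =>
    convert ih.cons_two using 2 with k
    · simp [List.replicate_succ]
    · ring

lemma cons_one (h : HstarExpansion l w) :
    HstarExpansion (1 :: l) fun k => (w k + 2 * ∑ j ∈ Icc 1 (k - 1), w j) / k := by
  intro n
  unfold HstarExpansion at h
  simp only [Hstar_cons_of_pos n one_pos, h, Int.natAbs_one, pow_one,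
    sum_Icc_sum_Icc_binomRatio_div, sum_binomRatio_div, mul_add, sum_add_distrib, mul_sum]
  rw [sum_comm' (t' := Icc 1 n) (s' := fun k => Icc 1 (k - 1))
    (by intros; simp only [mem_Icc, mem_Ioc]; omega), ← sum_add_distrib]
  refine sum_congr rfl fun k _ => ?_
  rw [← sum_mul, ← mul_sum]
  ring

end HstarExpansion

theorem stmt3_general (n a b : ℕ) :
    Hstar n (List.replicate a 2 ++ [1] ++ List.replicate b 2 ++ [1])
      = 2 * ∑ k ∈ Finset.Icc 1 n,
            (n.choose k : ℚ) / ((k : ℚ) ^ (2*(a+b)+2) * ((n+k).choose k))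
        + 4 * ∑ k ∈ Finset.Icc 1 n,
            Hh (k-1) [2 * (b : ℤ) + 1] * (n.choose k) / ((k : ℚ) ^ (2*a+1) * ((n+k).choose k)) := by
  have expansion := ((hstarExpansion_one.replicate_two_append b).cons_one).replicate_two_append a
  rw [show (List.replicate a 2 ++ [1] ++ List.replicate b 2 ++ [1] : List ℤ)
      = List.replicate a 2 ++ 1 :: (List.replicate b 2 ++ [1]) by simp, expansion n,
    mul_sum, mul_sum, ← sum_add_distrib]
  refine sum_congr rfl fun k hkn => ?_
  have hk : (k : ℚ) ≠ 0 := Nat.cast_ne_zero.mpr (by simp at hkn; omega)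
  have hH :
      Hh (k - 1) [2 * (b : ℤ) + 1] = ∑ j ∈ Icc 1 (k - 1), 1 / (j : ℚ) ^ (2 * b + 1) := by
    rw [Hh_singleton_of_pos _ (by positivity), show (2 * (b : ℤ) + 1).natAbs = 2 * b + 1 by omega]
  have hsum : ∑ j ∈ Icc 1 (k - 1), 2 / (j : ℚ) / (j : ℚ) ^ (2 * b)
      = 2 * ∑ j ∈ Icc 1 (k - 1), 1 / (j : ℚ) ^ (2 * b + 1) := by
    rw [mul_sum]
    exact sum_congr rfl fun j _ => by ring
  have hc := cast_choose_add_ne_zero n k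
  beta_reduce
  rw [hsum, hH, binomRatio]
  field_simp
  ring

theorem stmt3 (n a b : ℕ) (hn : 1 ≤ n) :
    Hstar n (List.replicate a 2 ++ [1] ++ List.replicate b 2 ++ [1])
      = 2 * ∑ k ∈ Finset.Icc 1 n,
            (n.choose k : ℚ) / ((k : ℚ) ^ (2*(a+b)+2) * ((n+k).choose k))
        + 4 * ∑ k ∈ Finset.Icc 1 n,
            Hh (k-1) [2 * (b : ℤ) + 1] * (n.choose k) / ((k : ℚ) ^ (2*a+1) * ((n+k).choose k)) :=
  stmt3_general n a b
end

section
/- Let n ≥ 1, a ≥ 1 be integers, let v be a tuple of nonzero integers, and let H_{k-1} denote alternating multiple harmonic sums. Then n·∑_{k=1}^{n} H_{k-1}(v)·(-1)^k·C(n,k)/(k^a·C(n+k,k)) = ∑_{k=1}^{n} H_{k-1}(v)·(-1)^k·C(n,k)/(k^{a-1}·C(n+k,k)) + 2·∑_{k=1}^{n} H_{k-1}(-a, v)·k·C(n,k)/C(n+k,k), where (-a, v) denotes the tuple with the negative argument -a prepended to v. -/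
open Finset

/-!
Expand `H_{k-1}(-a, v)` along its first index `j` and swap the order of summation. The inner
sum `∑_{j<k≤n} k C(n,k) / C(n+k,k)` telescopes to `(n-j)/2 · C(n,j) / C(n+j,j)`, after which the
identity holds term by term in `j`, since `n / j^a = 1 / j^(a-1) + (n-j) / j^a`.
-/

lemma Hh_neg_cons (m a : ℕ) (v : List ℤ) :
    Hh m ((-(a : ℤ)) :: v) = ∑ j ∈ Icc 1 m, (-1 : ℚ) ^ j / (j : ℚ) ^ a * Hh (j - 1) v := by
  have hsgn : aSgn (-(a : ℤ)) = -1 := if_neg (by omega)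
  rw [Hh, hsgn, Int.natAbs_neg, Int.natAbs_natCast]

lemma sum_Icc_sum_Icc_pred_mul {R : Type*} [NonUnitalNonAssocSemiring R] (x y : ℕ → R) (n : ℕ) :
    ∑ k ∈ Icc 1 n, (∑ j ∈ Icc 1 (k - 1), x j) * y k
      = ∑ j ∈ Icc 1 n, x j * ∑ k ∈ Icc (j + 1) n, y k := by
  simp_rw [sum_mul, mul_sum]
  exact sum_comm' fun k j => by simp only [mem_Icc]; omega

lemma cast_choose_succ_right_eq {n j : ℕ} (hj : j ≤ n) :
    (n.choose (j + 1) : ℚ) * (j + 1) = n.choose j * ((n : ℚ) - j) := by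
  rw [← Nat.cast_sub hj]
  exact_mod_cast Nat.choose_succ_right_eq n j

lemma cast_choose_succ_succ_mul (m j : ℕ) :
    ((m + 1).choose (j + 1) : ℚ) * (j + 1) = ((m : ℚ) + 1) * m.choose j := by
  exact_mod_cast (Nat.add_one_mul_choose_eq m j).symm

lemma sum_Icc_mul_choose_div_choose {n j : ℕ} (hj : j ≤ n) :
    ∑ k ∈ Icc (j + 1) n, (k : ℚ) * n.choose k / (n + k).choose k
      = ((n : ℚ) - j) / 2 * n.choose j / (n + j).choose j := by
  induction hj using Nat.decreasingInduction with
  | self => simp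
  | of_succ j hjn ih =>
    rw [← insert_Icc_add_one_left_eq_Icc (by omega : j + 1 ≤ n), sum_insert (by simp), ih]
    have hc₁ : ((n + j).choose j : ℚ) ≠ 0 := by exact_mod_cast (Nat.choose_pos (by omega)).ne'
    have hc₂ : ((n + j + 1).choose (j + 1) : ℚ) ≠ 0 := by
      exact_mod_cast (Nat.choose_pos (by omega)).ne'
    rw [show n + (j + 1) = n + j + 1 by omega]
    push_cast
    field_simp
    have hbig := cast_choose_succ_succ_mul (n + j) j
    push_cast at hbig
    linear_combination -(n.choose (j + 1) : ℚ) * hbig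
      + ((n + j + 1).choose (j + 1) : ℚ) * cast_choose_succ_right_eq hjn.le

theorem stmt8_general (n a : ℕ) (ha : 1 ≤ a) (v : List ℤ) :
    (n : ℚ) * ∑ k ∈ Finset.Icc 1 n,
        Hh (k-1) v * (-1 : ℚ) ^ k * (n.choose k) / ((k : ℚ) ^ a * ((n+k).choose k))
      = ∑ k ∈ Finset.Icc 1 n,
          Hh (k-1) v * (-1 : ℚ) ^ k * (n.choose k) / ((k : ℚ) ^ (a-1) * ((n+k).choose k))
        + 2 * ∑ k ∈ Finset.Icc 1 n,
            Hh (k-1) ((-(a : ℤ)) :: v) * (k : ℚ) * (n.choose k) / ((n+k).choose k) := by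
  have hswap : ∑ k ∈ Icc 1 n, Hh (k-1) ((-(a : ℤ)) :: v) * (k : ℚ) * n.choose k / (n+k).choose k
      = ∑ j ∈ Icc 1 n, (-1 : ℚ) ^ j / (j : ℚ) ^ a * Hh (j - 1) v
          * ∑ k ∈ Icc (j + 1) n, (k : ℚ) * n.choose k / (n + k).choose k := by
    rw [← sum_Icc_sum_Icc_pred_mul]
    refine sum_congr rfl fun k _ => ?_
    rw [Hh_neg_cons]
    ring
  rw [hswap, mul_sum, mul_sum, ← sum_add_distrib]
  refine sum_congr rfl fun j hj => ?_
  obtain ⟨hj1, hjn⟩ := mem_Icc.mp hj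
  rw [sum_Icc_mul_choose_div_choose hjn]
  have hj0 : (j : ℚ) ≠ 0 := by exact_mod_cast (by omega : j ≠ 0)
  have hc : ((n + j).choose j : ℚ) ≠ 0 := by exact_mod_cast (Nat.choose_pos (by omega)).ne'
  rw [show a = a - 1 + 1 by omega, pow_succ, Nat.add_sub_cancel]
  field_simp
  ring

theorem stmt8 (n a : ℕ) (hn : 1 ≤ n) (ha : 1 ≤ a) (v : List ℤ) (hv : ∀ s ∈ v, s ≠ 0) :
    (n : ℚ) * ∑ k ∈ Finset.Icc 1 n,
        Hh (k-1) v * (-1 : ℚ) ^ k * (n.choose k) / ((k : ℚ) ^ a * ((n+k).choose k))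
      = ∑ k ∈ Finset.Icc 1 n,
          Hh (k-1) v * (-1 : ℚ) ^ k * (n.choose k) / ((k : ℚ) ^ (a-1) * ((n+k).choose k))
        + 2 * ∑ k ∈ Finset.Icc 1 n,
            Hh (k-1) ((-(a : ℤ)) :: v) * (k : ℚ) * (n.choose k) / ((n+k).choose k) :=
  stmt8_general n a ha v
end

section
/- For all integers n ≥ 1, a ≥ 0, c ≥ 1, H*_n({1}^a, c) = -∑_{k=1}^{n} (-1)^k·C(n,k)·H_{k-1}(q_2,...,q_m)/k^{q_1}, summed over all compositions (q_1,...,q_m) obtained from the string (a+1, 1, 1, ..., 1) (with c-1 ones following a+1) by replacing each comma independently either by a comma or by addition of adjacent entries; equivalently, H*_n({1}^a, c) = -∑ over all tuples (q_1,...,q_m) with q_1 ≥ a+1, q_2,...,q_m ≥ 1 and q_1 + ... + q_m = a + c, of ∑_{k=1}^{n} (-1)^k·C(n,k)·H_{k-1}(q_2,...,q_m)/k^{q_1}. -/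
/-
The inner sum over compositions collapses: summing `H_{k-1}(q) / k^i` over all compositions `q`
of `w - i` and all `i` gives `H*_k({1}^w)`, the complete homogeneous symmetric polynomial of
degree `w` in `1, 1/2, …, 1/k`. The theorem thus says
`H*_n({1}^a, w+1) = ∑_k (-1)^(k+1) C(n,k) H*_k({1}^w) / k^(a+1)`.
The binomial transform `T_n f = ∑_k (-1)^(k+1) C(n,k) f(k)` (`altBinomSum`) satisfies
`T_n (f(k) / k) = ∑_{j ≤ n} T_j f / j` and `n T_n (∑_{m ≤ k} g(m)) = T_n (m g(m))`. The second
identity gives `T_j (H*_k({1}^w)) = j^(-w)` by induction on `w`; the first then strips the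
leading ones of `({1}^a, w+1)` one at a time.
-/

open Finset

def mhs : ℕ → List ℕ → ℚ
  | _, [] => 1
  | n, s :: r => ∑ k ∈ Icc 1 n, mhs (k - 1) r / (k : ℚ) ^ s

def mhsStar : ℕ → List ℕ → ℚ
  | _, [] => 1
  | n, s :: r => ∑ k ∈ Icc 1 n, mhsStar k r / (k : ℚ) ^ s

def altBinomSum (n : ℕ) (f : ℕ → ℚ) : ℚ :=
  ∑ k ∈ Icc 1 n, (-1) ^ (k + 1) * n.choose k * f k

lemma aSgn_natCast_of_pos {s : ℕ} (hs : 0 < s) : aSgn s = 1 :=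
  if_pos (by exact_mod_cast hs)

lemma natList_cons (s : ℕ) (r : List ℕ) : natList (s :: r) = (s : ℤ) :: natList r := rfl

lemma Hh_natList {q : List ℕ} (hq : ∀ s ∈ q, 0 < s) (n : ℕ) :
    Hh n (natList q) = mhs n q := by
  induction q generalizing n with
  | nil => rfl
  | cons s r ih =>
    rw [List.forall_mem_cons] at hq
    rw [natList_cons, Hh, mhs]
    refine sum_congr rfl fun k _ => ?_
    rw [ih hq.2, aSgn_natCast_of_pos hq.1, Int.natAbs_natCast, one_pow, one_div_mul_eq_div]

lemma Hstar_natList {q : List ℕ} (hq : ∀ s ∈ q, 0 < s) (n : ℕ) :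
    Hstar n (natList q) = mhsStar n q := by
  induction q generalizing n with
  | nil => rfl
  | cons s r ih =>
    rw [List.forall_mem_cons] at hq
    rw [natList_cons, Hstar, mhsStar]
    refine sum_congr rfl fun k _ => ?_
    rw [ih hq.2, aSgn_natCast_of_pos hq.1, Int.natAbs_natCast, one_pow, one_div_mul_eq_div]

lemma pos_of_mem_comps {w : ℕ} {q : List ℕ} (hq : q ∈ comps w) : ∀ s ∈ q, 0 < s := by
  induction w using Nat.strong_induction_on generalizing q with
  | _ w ih =>
    match w with
    | 0 =>
      rw [comps, List.mem_singleton] at hq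
      simp [hq]
    | w + 1 =>
      rw [comps] at hq
      simp only [List.mem_flatMap, List.mem_map, List.mem_range] at hq
      obtain ⟨i, hi, l, hl, rfl⟩ := hq
      exact List.forall_mem_cons.2 ⟨i.succ_pos, ih (w - i) (by omega) hl⟩

lemma sum_map_comps_succ (w : ℕ) (f : List ℕ → ℚ) :
    ((comps (w + 1)).map f).sum
      = ∑ i ∈ range (w + 1), ((comps (w - i)).map fun q => f ((i + 1) :: q)).sum := by
  rw [comps, List.map_flatMap, List.flatMap_def, List.sum_flatten, List.map_map,
    ← List.sum_toFinset _ List.nodup_range, List.toFinset_range]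
  simp only [List.map_map, Function.comp_def]

lemma List.sum_map_sum {α β : Type*} (l : List α) (s : Finset β) (f : β → α → ℚ) :
    (l.map fun a => ∑ b ∈ s, f b a).sum = ∑ b ∈ s, (l.map (f b)).sum := by
  simpa using Multiset.sum_map_sum (m := (l : Multiset α)) (s := s) (f := fun a b => f b a)

lemma mhsStar_ones_succ_succ (K m : ℕ) :
    mhsStar (K + 1) (List.replicate (m + 1) 1)
      = mhsStar K (List.replicate (m + 1) 1) + mhsStar (K + 1) (List.replicate m 1) / (K + 1) := by
  rw [List.replicate_succ, mhsStar, mhsStar, sum_Icc_succ_top (by omega)]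
  push_cast
  rw [pow_one]

lemma mhsStar_ones_succ_eq_sum (K w : ℕ) :
    mhsStar (K + 1) (List.replicate w 1)
      = ∑ i ∈ range (w + 1), mhsStar K (List.replicate (w - i) 1) / (K + 1 : ℚ) ^ i := by
  induction w with
  | zero => simp [mhsStar]
  | succ w ih =>
    rw [mhsStar_ones_succ_succ, ih, sum_range_succ' _ (w + 1), sum_div, add_comm]
    simp only [pow_succ, div_div, Nat.sub_zero, pow_zero, div_one, Nat.add_sub_add_right]

/- Both sides are the complete homogeneous symmetric polynomial `h_m(1, 1/2, …, 1/N)`: a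
composition lists the multiplicities of the distinct variables in a monomial. -/
lemma sum_map_comps_mhs (N m : ℕ) :
    ((comps m).map (mhs N)).sum = mhsStar N (List.replicate m 1) := by
  induction m using Nat.strong_induction_on generalizing N with
  | _ m ih =>
    match m with
    | 0 => simp [comps, mhs, mhsStar]
    | m + 1 =>
      rw [sum_map_comps_succ, List.replicate_succ, mhsStar]
      simp only [mhs, List.sum_map_sum]
      rw [sum_comm]
      refine sum_congr rfl fun k hk => ?_
      obtain ⟨K, rfl⟩ : ∃ K, k = K + 1 := ⟨k - 1, by simp at hk; omega⟩
      rw [mhsStar_ones_succ_eq_sum, sum_div]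
      refine sum_congr rfl fun i _ => ?_
      rw [← ih (m - i) (by omega), Nat.add_sub_cancel, pow_succ, pow_one, div_div]
      simp only [div_eq_mul_inv, List.sum_map_mul_right]
      push_cast
      ring

lemma mhsStar_ones_eq_sum_comps (K w : ℕ) :
    mhsStar (K + 1) (List.replicate w 1)
      = ∑ i ∈ range (w + 1), ((comps (w - i)).map fun q => mhs K q / (K + 1 : ℚ) ^ i).sum := by
  rw [mhsStar_ones_succ_eq_sum]
  refine sum_congr rfl fun i _ => ?_
  simp only [div_eq_mul_inv, List.sum_map_mul_right, sum_map_comps_mhs]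

lemma sum_Icc_neg_one_pow_mul_choose (J M : ℕ) :
    ∑ k ∈ Icc (M + 1) (J + 1), (-1 : ℚ) ^ (k + 1) * (J + 1).choose k = (-1) ^ M * J.choose M := by
  rcases le_or_gt M J with hMJ | hJM
  · have hsplit := sum_range_add_sum_Ico (fun k => (-1 : ℚ) ^ k * (J + 1).choose k)
      (show M + 1 ≤ J + 2 by omega)
    have hpartial :
        ∑ k ∈ range (M + 1), (-1 : ℚ) ^ k * (J + 1).choose k = (-1) ^ M * J.choose M := by
      exact_mod_cast Int.alternating_sum_range_choose_eq_choose
    have hfull : ∑ k ∈ range (J + 2), (-1 : ℚ) ^ k * (J + 1).choose k = 0 := by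
      rw [show J + 2 = J + 1 + 1 by omega]
      exact_mod_cast Int.alternating_sum_range_choose_of_ne J.succ_ne_zero
    rw [hpartial, hfull, show J + 2 = J + 1 + 1 by omega, Finset.Ico_add_one_right_eq_Icc] at hsplit
    simp only [pow_succ, mul_neg_one, neg_mul, sum_neg_distrib]
    linarith
  · rw [Icc_eq_empty (by omega), Nat.choose_eq_zero_of_lt hJM]
    simp

lemma sum_Icc_choose_div (n k : ℕ) (hk : 0 < k) :
    ∑ j ∈ Icc k n, (j.choose k : ℚ) / j = n.choose k / k := by
  induction n with
  | zero => simp [Nat.choose_eq_zero_of_lt hk, Icc_eq_empty_of_lt hk]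
  | succ n ih =>
    rcases le_or_gt k (n + 1) with hkn | hkn
    · rw [sum_Icc_succ_top hkn, ih]
      have hpascal : (n.choose k : ℚ) * (n + 1) = (n + 1).choose k * (n + 1 - k) := by
        exact_mod_cast Nat.choose_mul_succ_eq n k
      field_simp
      push_cast
      linear_combination hpascal
    · rw [Icc_eq_empty (by omega), Nat.choose_eq_zero_of_lt hkn]
      simp

lemma sum_Icc_Icc_comm (n : ℕ) (F : ℕ → ℕ → ℚ) :
    ∑ k ∈ Icc 1 n, ∑ m ∈ Icc 1 k, F k m = ∑ m ∈ Icc 1 n, ∑ k ∈ Icc m n, F k m :=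
  sum_comm' fun k m => by simp only [mem_Icc]; omega

lemma altBinomSum_congr {n : ℕ} {f g : ℕ → ℚ} (h : ∀ k ∈ Icc 1 n, f k = g k) :
    altBinomSum n f = altBinomSum n g :=
  sum_congr rfl fun k hk => by rw [h k hk]

lemma altBinomSum_div (n : ℕ) (f : ℕ → ℚ) :
    altBinomSum n (fun k => f k / k) = ∑ j ∈ Icc 1 n, altBinomSum j f / j := by
  unfold altBinomSum
  calc ∑ k ∈ Icc 1 n, (-1) ^ (k + 1) * n.choose k * (f k / k)
      = ∑ k ∈ Icc 1 n, ∑ j ∈ Icc k n, (-1) ^ (k + 1) * j.choose k * f k / j := by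
        refine sum_congr rfl fun k hk => ?_
        rw [mem_Icc] at hk
        calc (-1) ^ (k + 1) * n.choose k * (f k / k) = (-1) ^ (k + 1) * f k * (n.choose k / k) := by
              ring
          _ = _ := by
              rw [← sum_Icc_choose_div n k hk.1, mul_sum]
              exact sum_congr rfl fun j _ => by ring
    _ = ∑ j ∈ Icc 1 n, altBinomSum j f / j := by
        rw [← sum_Icc_Icc_comm]
        simp only [altBinomSum, sum_div]

lemma mul_altBinomSum_partialSum (j : ℕ) (g : ℕ → ℚ) :
    j * altBinomSum j (fun k => ∑ m ∈ Icc 1 k, g m) = altBinomSum j (fun m => m * g m) := by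
  rcases j with _ | J
  · simp [altBinomSum]
  unfold altBinomSum
  simp only [mul_sum]
  rw [sum_Icc_Icc_comm]
  refine sum_congr rfl fun m hm => ?_
  obtain ⟨M, rfl⟩ : ∃ M, m = M + 1 := ⟨m - 1, by simp at hm; omega⟩
  have htail := sum_Icc_neg_one_pow_mul_choose J M
  have hchoose : ((J + 1 : ℕ) : ℚ) * J.choose M = (J + 1).choose (M + 1) * (M + 1) := by
    exact_mod_cast Nat.add_one_mul_choose_eq J M
  calc ∑ k ∈ Icc (M + 1) (J + 1),
        ((J + 1 : ℕ) : ℚ) * ((-1) ^ (k + 1) * (J + 1).choose k * g (M + 1))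
      = ((J + 1 : ℕ) : ℚ) * ((-1) ^ M * J.choose M) * g (M + 1) := by
        rw [← htail, mul_sum, sum_mul]
        refine sum_congr rfl fun k _ => by ring
    _ = _ := by
        push_cast at hchoose ⊢
        linear_combination (-1) ^ M * g (M + 1) * hchoose

lemma altBinomSum_mhsStar_ones (J w : ℕ) :
    altBinomSum (J + 1) (fun k => mhsStar k (List.replicate w 1)) = 1 / (J + 1 : ℚ) ^ w := by
  induction w with
  | zero =>
    simpa [altBinomSum, mhsStar] using sum_Icc_neg_one_pow_mul_choose J 0
  | succ w ih =>
    have hcancel : ∀ m ∈ Icc 1 (J + 1),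
        (m : ℚ) * (mhsStar m (List.replicate w 1) / m) = mhsStar m (List.replicate w 1) :=
      fun m hm => mul_div_cancel₀ _ (Nat.cast_ne_zero.2 (by rw [mem_Icc] at hm; omega))
    have hpartial := mul_altBinomSum_partialSum (J + 1) fun m => mhsStar m (List.replicate w 1) / m
    rw [altBinomSum_congr hcancel, ih] at hpartial
    have hstar : ∀ k, mhsStar k (List.replicate (w + 1) 1)
        = ∑ m ∈ Icc 1 k, mhsStar m (List.replicate w 1) / m := fun k => by
      simp only [List.replicate_succ, mhsStar, pow_one]
    simp only [hstar]
    push_cast at hpartial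
    field_simp at hpartial ⊢
    linear_combination hpartial

lemma mhsStar_ones_append (n a w : ℕ) :
    mhsStar n (List.replicate a 1 ++ [w + 1])
      = altBinomSum n (fun k => mhsStar k (List.replicate w 1) / (k : ℚ) ^ (a + 1)) := by
  induction a generalizing n with
  | zero =>
    simp only [zero_add, pow_one, altBinomSum_div, List.replicate_zero, List.nil_append, mhsStar]
    refine sum_congr rfl fun j hj => ?_
    obtain ⟨J, rfl⟩ : ∃ J, j = J + 1 := ⟨j - 1, by simp at hj; omega⟩
    rw [altBinomSum_mhsStar_ones]
    push_cast
    field_simp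
    ring
  | succ a ih =>
    simp only [pow_succ _ (a + 1), ← div_div, altBinomSum_div, List.replicate_succ,
      List.cons_append, mhsStar, pow_one, ih]

lemma altBinomSum_mhsStar_ones_div_pow (n p w : ℕ) :
    altBinomSum n (fun k => mhsStar k (List.replicate w 1) / (k : ℚ) ^ p)
      = -∑ i ∈ range (w + 1), ((comps (w - i)).map fun q =>
          ∑ k ∈ Icc 1 n, (-1 : ℚ) ^ k * n.choose k * mhs (k - 1) q / (k : ℚ) ^ (p + i)).sum := by
  simp only [List.sum_map_sum]
  rw [sum_comm, ← sum_neg_distrib]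
  refine sum_congr rfl fun k hk => ?_
  obtain ⟨K, rfl⟩ : ∃ K, k = K + 1 := ⟨k - 1, by simp at hk; omega⟩
  push_cast
  rw [mhsStar_ones_eq_sum_comps, sum_div, mul_sum, ← sum_neg_distrib]
  refine sum_congr rfl fun i _ => ?_
  simp only [div_eq_mul_inv, List.sum_map_mul_right, List.sum_map_mul_left]
  ring

theorem stmt14_general (n a c : ℕ) (hc : 1 ≤ c) :
    Hstar n (List.replicate a 1 ++ [(c : ℤ)])
      = -∑ i ∈ Finset.range c,
          ((comps (c - 1 - i)).map (fun q =>
            ∑ k ∈ Finset.Icc 1 n,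
              (-1 : ℚ) ^ k * (n.choose k) * Hh (k-1) (natList q)
                / (k : ℚ) ^ (a+1+i))).sum := by
  obtain ⟨w, rfl⟩ : ∃ w, c = w + 1 := ⟨c - 1, by omega⟩
  have hnatList : List.replicate a (1 : ℤ) ++ [((w + 1 : ℕ) : ℤ)]
      = natList (List.replicate a 1 ++ [w + 1]) := by
    induction a with
    | zero => rfl
    | succ a ih => rw [List.replicate_succ, List.replicate_succ, List.cons_append, List.cons_append,
        natList_cons, ih, Nat.cast_one]
  have hpos : ∀ s ∈ List.replicate a 1 ++ [w + 1], 0 < s := by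
    intro s hs
    simp only [List.mem_append, List.mem_replicate, List.mem_singleton] at hs
    omega
  rw [hnatList, Hstar_natList hpos, mhsStar_ones_append, altBinomSum_mhsStar_ones_div_pow]
  refine congrArg Neg.neg (sum_congr rfl fun i _ => congrArg List.sum
    (List.map_congr_left fun q hq => ?_))
  simp only [Hh_natList (pos_of_mem_comps hq)]

theorem stmt14 (n a c : ℕ) (hn : 1 ≤ n) (hc : 1 ≤ c) :
    Hstar n (List.replicate a 1 ++ [(c : ℤ)])
      = -∑ i ∈ Finset.range c,
          ((comps (c - 1 - i)).map (fun q =>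
            ∑ k ∈ Finset.Icc 1 n,
              (-1 : ℚ) ^ k * (n.choose k) * Hh (k-1) (natList q)
                / (k : ℚ) ^ (a+1+i))).sum :=
  stmt14_general n a c hc
end

section
/- Let d ≥ 0 be an integer, e a real number with e > 1, and s a tuple of d nonzero integers. Then lim_{n→∞} ∑_{k=1}^{n} |H_{k-1}(s)|/k^e · (1 - C(n,k)/C(n+k,k)) = 0. -/
open Finset

open Filter Topology Real

/-!
Since every `|sᵢ| ≥ 1`, induction on the depth `d` bounds `|H_n(s)|` by `(1 + h_n)^d`, with
`h_n` the harmonic number, hence by `(2 + log n)^d`; so the weights `|H_{k-1}(s)| / k^e` are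
summable for `e > 1`. The factors `1 - C(n,k)/C(n+k,k)` lie in `[0, 1]` and tend to `0` for each
fixed `k`, so the sums tend to `0` by dominated convergence for series (Tannery's theorem).
-/

lemma harmonic_mono : Monotone harmonic :=
  monotone_nat_of_le_succ fun n => by
    rw [harmonic_succ, le_add_iff_nonneg_right]
    positivity

lemma harmonic_nonneg (n : ℕ) : 0 ≤ harmonic n :=
  harmonic_zero ▸ harmonic_mono n.zero_le

lemma abs_aSgn_pow (a : ℤ) (k : ℕ) : |aSgn a ^ k| = 1 := by
  unfold aSgn; split <;> simp

lemma abs_Hh_le (s : List ℤ) (hs : ∀ x ∈ s, x ≠ 0) (n : ℕ) :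
    |Hh n s| ≤ (1 + harmonic n) ^ s.length := by
  induction s generalizing n with
  | nil => simp [Hh]
  | cons a r ih =>
    have ha : a.natAbs ≠ 0 := Int.natAbs_ne_zero.2 (hs a List.mem_cons_self)
    have hr : ∀ x ∈ r, x ≠ 0 := fun x hx => hs x (List.mem_cons_of_mem a hx)
    have hterm : ∀ k ∈ Icc 1 n, |aSgn a ^ k / (k : ℚ) ^ a.natAbs * Hh (k - 1) r|
        ≤ (k : ℚ)⁻¹ * (1 + harmonic n) ^ r.length := by
      intro k hk
      obtain ⟨hk1, hkn⟩ := mem_Icc.1 hk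
      rw [abs_mul, abs_div, abs_aSgn_pow, abs_pow, Nat.abs_cast, one_div]
      have hinv : ((k : ℚ) ^ a.natAbs)⁻¹ ≤ (k : ℚ)⁻¹ :=
        inv_anti₀ (by positivity) (le_self_pow₀ (by exact_mod_cast hk1) ha)
      have hHh : |Hh (k - 1) r| ≤ (1 + harmonic n) ^ r.length :=
        (ih hr (k - 1)).trans <| pow_le_pow_left₀ (by linarith [harmonic_nonneg (k - 1)])
          (by linarith [harmonic_mono (show k - 1 ≤ n by omega)]) _
      exact mul_le_mul hinv hHh (abs_nonneg _) (by positivity)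
    calc |Hh n (a :: r)|
        ≤ ∑ k ∈ Icc 1 n, |aSgn a ^ k / (k : ℚ) ^ a.natAbs * Hh (k - 1) r| :=
          abs_sum_le_sum_abs _ _
      _ ≤ ∑ k ∈ Icc 1 n, (k : ℚ)⁻¹ * (1 + harmonic n) ^ r.length := sum_le_sum hterm
      _ = harmonic n * (1 + harmonic n) ^ r.length := by rw [← sum_mul, harmonic_eq_sum_Icc]
      _ ≤ (1 + harmonic n) ^ (a :: r).length := by
          rw [List.length_cons, pow_succ']
          exact mul_le_mul_of_nonneg_right (by linarith)
            (pow_nonneg (by linarith [harmonic_nonneg n]) _)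

lemma abs_Hh_pred_le (s : List ℤ) (hs : ∀ x ∈ s, x ≠ 0) (k : ℕ) :
    ((|Hh (k - 1) s| : ℚ) : ℝ) ≤ (2 + log k) ^ s.length := by
  have h := abs_Hh_le s hs (k - 1)
  have hH : ((harmonic (k - 1) : ℚ) : ℝ) ≤ 1 + log k :=
    (Rat.cast_le.2 (harmonic_mono (Nat.sub_le k 1))).trans (harmonic_le_one_add_log k)
  calc ((|Hh (k - 1) s| : ℚ) : ℝ) ≤ (1 + ((harmonic (k - 1) : ℚ) : ℝ)) ^ s.length := by
        exact_mod_cast h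
    _ ≤ (2 + log k) ^ s.length := by
        gcongr ?_ ^ _
        · linarith [(Rat.cast_nonneg (K := ℝ)).2 (harmonic_nonneg (k - 1))]
        · linarith

lemma summable_two_add_log_pow_div_rpow (m : ℕ) {e : ℝ} (he : 1 < e) :
    Summable fun k : ℕ => (2 + log k) ^ m / (k : ℝ) ^ e := by
  obtain ⟨p, hp, hpe⟩ : ∃ p : ℝ, 0 < p ∧ p - e < -1 := ⟨(e - 1) / 2, by linarith, by linarith⟩
  have hlog : (fun x : ℝ => 2 + log x) =O[atTop] log :=
    Asymptotics.IsBigO.of_bound 3 <| by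
      filter_upwards [tendsto_log_atTop.eventually_ge_atTop 1] with x hx
      rw [norm_of_nonneg (by linarith), norm_of_nonneg (by linarith)]
      linarith
  have hpow : (fun x : ℝ => (2 + log x) ^ m) =O[atTop] fun x => x ^ p := by
    refine (hlog.pow m).trans ?_
    simpa only [rpow_natCast] using (isLittleO_log_rpow_rpow_atTop m hp).isBigO
  have hdiv : (fun x : ℝ => (2 + log x) ^ m / x ^ e) =O[atTop] fun x => x ^ (p - e) := by
    refine (hpow.mul (Asymptotics.isBigO_refl (fun x : ℝ => (x ^ e)⁻¹) atTop)).congr'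
      (Eventually.of_forall fun x => (div_eq_mul_inv _ _).symm) ?_
    filter_upwards [eventually_gt_atTop 0] with x hx
    rw [rpow_sub hx, div_eq_mul_inv]
  exact summable_of_isBigO_nat (summable_nat_rpow.2 hpe)
    (hdiv.comp_tendsto tendsto_natCast_atTop_atTop)

lemma choose_div_choose_add_eq_prod {n k : ℕ} (hk : k ≤ n) :
    (n.choose k : ℝ) / (n + k).choose k = ∏ i ∈ range k, ((n - i : ℕ) : ℝ) / ((n - i : ℕ) + k) := by
  have hdesc (m : ℕ) : (m.descFactorial k : ℝ) = k.factorial * m.choose k := by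
    exact_mod_cast m.descFactorial_eq_factorial_mul_choose k
  rw [← mul_div_mul_left _ _ (Nat.cast_ne_zero.2 k.factorial_ne_zero), ← hdesc, ← hdesc,
    Nat.descFactorial_eq_prod_range, Nat.descFactorial_eq_prod_range, Nat.cast_prod,
    Nat.cast_prod, ← prod_div_distrib]
  refine prod_congr rfl fun i hi => ?_
  rw [show n + k - i = n - i + k by have := mem_range.1 hi; omega, Nat.cast_add]

lemma tendsto_choose_div_choose_add (k : ℕ) :
    Tendsto (fun n : ℕ => (n.choose k : ℝ) / (n + k).choose k) atTop (𝓝 1) := by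
  have hprod : Tendsto (fun n : ℕ => ∏ i ∈ range k, ((n - i : ℕ) : ℝ) / ((n - i : ℕ) + k))
      atTop (𝓝 (∏ _i ∈ range k, (1 : ℝ))) :=
    tendsto_finsetProd _ fun i _ =>
      (tendsto_natCast_div_add_atTop (k : ℝ)).comp (tendsto_sub_atTop_nat i)
  rw [prod_const_one] at hprod
  exact hprod.congr' <| (eventually_ge_atTop k).mono fun n hn =>
    (choose_div_choose_add_eq_prod hn).symm

lemma abs_one_sub_choose_div_choose_add_le_one (n k : ℕ) :
    |1 - (n.choose k : ℝ) / (n + k).choose k| ≤ 1 := by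
  have h₀ : 0 ≤ (n.choose k : ℝ) / (n + k).choose k := by positivity
  have h₁ : (n.choose k : ℝ) / (n + k).choose k ≤ 1 :=
    div_le_one_of_le₀ (by exact_mod_cast Nat.choose_le_choose k (n.le_add_right k)) (by positivity)
  exact abs_le.2 ⟨by linarith, by linarith⟩

lemma tendsto_sum_mul_of_tendsto_zero {α β : Type*} {l : Filter α} {a : β → ℝ}
    (ha : Summable a) (ha₀ : ∀ k, 0 ≤ a k) {b : α → β → ℝ} (hb : ∀ n k, |b n k| ≤ 1)
    (hlim : ∀ k, Tendsto (b · k) l (𝓝 0)) (S : α → Finset β) :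
    Tendsto (fun n => ∑ k ∈ S n, a k * b n k) l (𝓝 0) := by
  have hterm : ∀ n k, ‖(S n : Set β).indicator (fun k => a k * b n k) k‖ ≤ a k * |b n k| :=
    fun n k => by
      refine (norm_indicator_le_norm_self _ _).trans_eq ?_
      rw [norm_mul, norm_of_nonneg (ha₀ k), norm_eq_abs]
  have h := tendsto_tsum_of_dominated_convergence (g := fun _ => (0 : ℝ)) ha
    (fun k => squeeze_zero_norm (hterm · k) <| by
      simpa only [abs_zero, mul_zero] using (hlim k).abs.const_mul (a k))
    (Eventually.of_forall fun n k => (hterm n k).trans (mul_le_of_le_one_right (ha₀ k) (hb n k)))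
  simpa only [tsum_zero, ← sum_eq_tsum_indicator] using h

theorem stmt15_general (e : ℝ) (he : 1 < e) (s : List ℤ)
    (hs : ∀ x ∈ s, x ≠ 0) :
    Filter.Tendsto
      (fun n : ℕ => ∑ k ∈ Finset.Icc 1 n,
        ((|Hh (k-1) s| : ℚ) : ℝ) / (k : ℝ) ^ e
          * (1 - (n.choose k : ℝ) / ((n+k).choose k)))
      Filter.atTop (nhds 0) := by
  have hsum : Summable fun k : ℕ => ((|Hh (k - 1) s| : ℚ) : ℝ) / (k : ℝ) ^ e :=
    (summable_two_add_log_pow_div_rpow s.length he).of_nonneg_of_le (fun k => by positivity)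
      fun k => div_le_div_of_nonneg_right (abs_Hh_pred_le s hs k) (by positivity)
  refine tendsto_sum_mul_of_tendsto_zero hsum (fun k => by positivity)
    abs_one_sub_choose_div_choose_add_le_one (fun k => ?_) (Icc 1 ·)
  simpa only [sub_self] using (tendsto_choose_div_choose_add k).const_sub 1

theorem stmt15 (d : ℕ) (e : ℝ) (he : 1 < e) (s : List ℤ)
    (hd : s.length = d) (hs : ∀ x ∈ s, x ≠ 0) :
    Filter.Tendsto
      (fun n : ℕ => ∑ k ∈ Finset.Icc 1 n,
        ((|Hh (k-1) s| : ℚ) : ℝ) / (k : ℝ) ^ e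
          * (1 - (n.choose k : ℝ) / ((n+k).choose k)))
      Filter.atTop (nhds 0) :=
  stmt15_general e he s hs
end
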